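/- arXiv:math/0611898 — 3 statements merged into one kernel-verified Lean document; each statement's English description precedes it below -/
import Mathlib

section
/- Let a, α, β, n be positive integers with 2 ≤ β ≤ α, 0 < a < α, gcd(a, α) = 1, and n ≤ ⌊(α+1)/2⌋. Then l(1/α(a, -a, 1), n) ≥ l(1/β(1, -1, 1), n). -/
/-- The Reid correction term `l(r, b, m) = ∑_{j=1}^{m-1} \overline{bj}(r-\overline{bj})/(2r)`,
where `\overline{bj}` is the smallest non-negative residue of `b*j` mod `r`.
(The `j = 0` term vanishes, so we may sum over `j ∈ range m`.) -/
def reidL (r b m : ℕ) : ℚ :=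
  ∑ j ∈ Finset.range m,
    (((b * j) % r : ℕ) : ℚ) * ((r : ℚ) - (((b * j) % r : ℕ) : ℚ)) / (2 * r)

/-- A basket of type `1/r(a, -a, 1)`: a pair of integers `(r, a)` with `r ≥ 2`,
`0 < a < r` and `gcd(a, r) = 1`. -/
structure Basket where
  r : ℕ
  a : ℕ
  two_le_r : 2 ≤ r
  a_pos : 0 < a
  a_lt_r : a < r
  coprime : Nat.Coprime a r

/-- The unique `b` with `0 < b < r` and `a * b ≡ 1 (mod r)`. -/
def Basket.binv (Q : Basket) : ℕ := ((Q.a : ZMod Q.r)⁻¹).val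

/-- The correction term `l(Q, m)` of a basket. -/
def Basket.l (Q : Basket) (m : ℕ) : ℚ := reidL Q.r Q.binv m

/-- `Δ_n(Q) := n² l(Q,2) + l(Q,n) - l(Q,n+1)`. -/
def Basket.delta (Q : Basket) (n : ℕ) : ℚ :=
  (n : ℚ) ^ 2 * Q.l 2 + Q.l n - Q.l (n + 1)

/-- A formal basket datum with `χ = 1`: a finite multiset of baskets together
with a positive rational number `K`. -/
structure FormalDatum where
  B : Multiset Basket
  K : ℚ
  K_pos : 0 < K

/-- The formal plurigenus `P(m) = (1/12)m(m-1)(2m-1)K - (2m-1) + ∑_{Q ∈ B} l(Q, m)`. -/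
def FormalDatum.P (D : FormalDatum) (m : ℕ) : ℚ :=
  (1 / 12 : ℚ) * m * (m - 1) * (2 * m - 1) * D.K - (2 * m - 1)
    + (D.B.map (fun Q => Q.l m)).sum

/-!
Write `g_r(t) = t(r - t)/(2r)` (`reidTerm r t`), so that `l(r, b, n) = ∑_{j<n} g_r(bj mod r)`.
For `j < n` one has `2j < α`, and `g` is increasing in `r` and, below `r/2`, in `t`; this gives
`g_β(j mod β) ≤ g_α(j mod β) ≤ g_α(j)` termwise, i.e. `l(β, 1, n) ≤ l(α, 1, n)`.
Since `g_α(t) = g_α(α - t)`, the term `g_α(bj mod α)` only depends on the distance `d_j ≤ α/2`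
from `bj` to `0` in `ℤ/α`. As `b` is a unit and `2(n - 1) < α`, the distances `d_0, …, d_{n-1}`
are distinct, and `g_α` is increasing on `[0, α/2]`, so `∑_{j<n} g_α(d_j)` is at least
`∑_{j<n} g_α(j) = l(α, 1, n)`.
-/

open Finset

def reidTerm (r t : ℕ) : ℚ := t * (r - t) / (2 * r)

lemma reidL_eq_sum_reidTerm (r b m : ℕ) :
    reidL r b m = ∑ j ∈ range m, reidTerm r (b * j % r) := rfl

lemma reidTerm_sub_self {r t : ℕ} (ht : t ≤ r) : reidTerm r (r - t) = reidTerm r t := by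
  unfold reidTerm
  push_cast [ht]
  ring

lemma monotoneOn_reidTerm (r : ℕ) : MonotoneOn (reidTerm r) (Set.Iic (r / 2)) := by
  intro i hi j hj hij
  rw [Set.mem_Iic] at hi hj
  have hij' : (i : ℚ) ≤ j := by exact_mod_cast hij
  have hsum : (i : ℚ) + j ≤ r := by exact_mod_cast (by omega : i + j ≤ r)
  refine div_le_div_of_nonneg_right ?_ (by positivity)
  nlinarith [mul_nonneg (sub_nonneg.2 hij') (by linarith : (0 : ℚ) ≤ r - i - j)]

lemma reidTerm_le_reidTerm_of_le {s r : ℕ} (t : ℕ) (hs : 0 < s) (hsr : s ≤ r) :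
    reidTerm s t ≤ reidTerm r t := by
  have hs' : (0 : ℚ) < s := by exact_mod_cast hs
  have hr' : (0 : ℚ) < r := by exact_mod_cast hs.trans_le hsr
  have hsr' : (s : ℚ) ≤ r := by exact_mod_cast hsr
  have key : (t : ℚ) ^ 2 / (2 * r) ≤ t ^ 2 / (2 * s) := by gcongr
  calc reidTerm s t = t / 2 - t ^ 2 / (2 * s) := by unfold reidTerm; field_simp
    _ ≤ t / 2 - t ^ 2 / (2 * r) := by linarith
    _ = reidTerm r t := by unfold reidTerm; field_simp

lemma reidL_one_le_reidL_one {α β n : ℕ} (hβ : 0 < β) (hβα : β ≤ α) (hn : 2 * n ≤ α + 1) :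
    reidL β 1 n ≤ reidL α 1 n := by
  rw [reidL_eq_sum_reidTerm, reidL_eq_sum_reidTerm]
  refine sum_le_sum fun j hj => ?_
  have hjα : 2 * j < α := by rw [mem_range] at hj; omega
  have hmod : j % β ≤ j := Nat.mod_le j β
  simp only [one_mul]
  rw [Nat.mod_eq_of_lt (by omega : j < α)]
  calc reidTerm β (j % β) ≤ reidTerm α (j % β) := reidTerm_le_reidTerm_of_le _ hβ hβα
    _ ≤ reidTerm α j :=
      monotoneOn_reidTerm α (Set.mem_Iic.2 (by omega)) (Set.mem_Iic.2 (by omega)) hmod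

lemma sum_range_card_le_sum {M : Type*} [AddCommMonoid M] [PartialOrder M]
    [IsOrderedAddMonoid M] {f : ℕ → M} {N : ℕ} (hf : MonotoneOn f (Set.Iic N))
    {s : Finset ℕ} (hs : ∀ x ∈ s, x ≤ N) : ∑ i ∈ range #s, f i ≤ ∑ x ∈ s, f x := by
  induction s using Finset.induction_on_max with
  | empty => simp
  | insert a s has ih =>
    have ha : a ∉ s := fun h => lt_irrefl a (has a h)
    have hsa : #s ≤ a := by
      simpa using card_le_card (fun x hx => mem_range.2 (has x hx) : s ⊆ range a)
    have haN : a ≤ N := hs a (mem_insert_self a s)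
    rw [card_insert_of_notMem ha, sum_range_succ, sum_insert ha, add_comm]
    exact add_le_add (hf (Set.mem_Iic.2 (hsa.trans haN)) (Set.mem_Iic.2 haN) hsa)
      (ih fun x hx => hs x (mem_insert_of_mem hx))

lemma reidTerm_val_eq_natAbs_valMinAbs {α : ℕ} [NeZero α] (x : ZMod α) :
    reidTerm α x.val = reidTerm α x.valMinAbs.natAbs := by
  rw [ZMod.valMinAbs_natAbs_eq_min]
  rcases le_total x.val (α - x.val) with h | h
  · rw [min_eq_left h]
  · rw [min_eq_right h, reidTerm_sub_self x.val_lt.le]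

lemma injOn_natAbs_valMinAbs_mul {α n : ℕ} {u : ZMod α} (hu : IsUnit u)
    (hn : 2 * n ≤ α + 1) :
    Set.InjOn (fun j : ℕ => (u * j).valMinAbs.natAbs) (range n) := by
  intro i hi j hj hij
  rw [coe_range, Set.mem_Iio] at hi hj
  simp only [ZMod.natAbs_valMinAbs_eq_natAbs_valMinAbs, ← mul_neg, hu.mul_right_inj] at hij
  rcases hij with h | h
  · rw [ZMod.natCast_eq_natCast_iff', Nat.mod_eq_of_lt (by omega),
      Nat.mod_eq_of_lt (by omega)] at h
    exact h
  · have hdvd : α ∣ i + j := by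
      rw [← ZMod.natCast_eq_zero_iff, Nat.cast_add, h, neg_add_cancel]
    have := Nat.eq_zero_of_dvd_of_lt hdvd (by omega)
    omega

lemma reidL_one_le_reidL {α b n : ℕ} (hb : b.Coprime α) (hn : 2 * n ≤ α + 1) :
    reidL α 1 n ≤ reidL α b n := by
  rcases Nat.eq_zero_or_pos n with rfl | hn0
  · simp [reidL]
  have : NeZero α := ⟨by omega⟩
  set d : ℕ → ℕ := fun j => ((b : ZMod α) * j).valMinAbs.natAbs
  have hd : Set.InjOn d (range n) :=
    injOn_natAbs_valMinAbs_mul ((ZMod.isUnit_iff_coprime b α).2 hb) hn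
  have hcard : #((range n).image d) = n := by rw [card_image_of_injOn hd, card_range]
  have hsum := sum_range_card_le_sum (monotoneOn_reidTerm α)
    (s := (range n).image d) (by simp [d, ZMod.natAbs_valMinAbs_le])
  rw [hcard, sum_image hd] at hsum
  calc reidL α 1 n = ∑ j ∈ range n, reidTerm α j := by
        rw [reidL_eq_sum_reidTerm]
        refine sum_congr rfl fun j hj => ?_
        rw [mem_range] at hj
        rw [one_mul, Nat.mod_eq_of_lt (by omega)]
    _ ≤ ∑ j ∈ range n, reidTerm α (d j) := hsum
    _ = reidL α b n := by
        rw [reidL_eq_sum_reidTerm]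
        refine sum_congr rfl fun j _ => ?_
        rw [← reidTerm_val_eq_natAbs_valMinAbs, ← Nat.cast_mul, ZMod.val_natCast]

lemma Basket.binv_coprime (Q : Basket) : Q.binv.Coprime Q.r := by
  have : NeZero Q.r := ⟨by have := Q.two_le_r; omega⟩
  rw [← ZMod.isUnit_iff_coprime, Basket.binv, ZMod.natCast_zmod_val]
  exact .of_mul_eq_one _ (ZMod.inv_mul_of_unit _ ((ZMod.isUnit_iff_coprime _ _).2 Q.coprime))

theorem basket_l_ge_reidL_one_smaller_general (Q : Basket) (β n : ℕ) (hβ : 2 ≤ β)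
    (hβα : β ≤ Q.r) (hle : n ≤ (Q.r + 1) / 2) :
    reidL β 1 n ≤ Q.l n := by
  have hn : 2 * n ≤ Q.r + 1 := by omega
  exact (reidL_one_le_reidL_one (by omega) hβα hn).trans
    (reidL_one_le_reidL Q.binv_coprime hn)

/-- For a basket `Q` of index `α = Q.r`, an integer `2 ≤ β ≤ α` and
`1 ≤ n ≤ ⌊(α+1)/2⌋`, one has `l(1/α(a,-a,1), n) ≥ l(1/β(1,-1,1), n)`. -/
theorem basket_l_ge_reidL_one_smaller (Q : Basket) (β n : ℕ) (hβ : 2 ≤ β)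
    (hβα : β ≤ Q.r) (hn : 0 < n) (hle : n ≤ (Q.r + 1) / 2) :
    reidL β 1 n ≤ Q.l n :=
  basket_l_ge_reidL_one_smaller_general Q β n hβ hβα hle
end

section
/- Let (B, K) be a formal basket datum with χ = 1 whose formal plurigenera P(m) are non-negative integers for every integer m ≥ 2. If P(2) ≥ 1, then P(2n) ≥ n for every integer n ≥ 2. -/

def qf (r t : ℕ) : ℚ := (t : ℚ) * ((r : ℚ) - (t : ℚ)) / (2 * r)

lemma qf_core {r x y : ℕ} (hr : 0 < r) (hx : x < r) (hy : y < r) :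
    qf r ((x + y) % r) ≤ qf r x + qf r y := by
  have hrq : (0:ℚ) < r := by exact_mod_cast hr
  have hxq : (x:ℚ) < r := by exact_mod_cast hx
  have hyq : (y:ℚ) < r := by exact_mod_cast hy
  unfold qf
  rw [← add_div]
  refine div_le_div₀ ?_ ?_ (by positivity) ?_
  · nlinarith [mul_nonneg (Nat.cast_nonneg (α := ℚ) x) (sub_nonneg.mpr hxq.le),
      mul_nonneg (Nat.cast_nonneg (α := ℚ) y) (sub_nonneg.mpr hyq.le)]
  · rcases lt_or_ge (x + y) r with h | h
    · rw [Nat.mod_eq_of_lt h]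
      push_cast
      nlinarith [mul_nonneg (Nat.cast_nonneg (α := ℚ) x) (Nat.cast_nonneg (α := ℚ) y)]
    · have hxy : (x + y) % r = x + y - r := by
        rw [Nat.mod_eq_sub_mod h, Nat.mod_eq_of_lt (by omega)]
      rw [hxy]
      have hc : ((x + y - r : ℕ) : ℚ) = (x:ℚ) + y - r := by
        push_cast [h]; ring
      rw [hc]
      nlinarith [mul_nonneg (sub_nonneg.mpr hxq.le) (sub_nonneg.mpr hyq.le)]
  · exact le_rfl

lemma qf_mod_core {r : ℕ} (hr : 0 < r) (u v : ℕ) :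
    qf r ((u + v) % r) ≤ qf r (u % r) + qf r (v % r) := by
  have := qf_core hr (Nat.mod_lt u hr) (Nat.mod_lt v hr)
  simpa [Nat.add_mod] using this

lemma qf_symm {r x : ℕ} (hr : 0 < r) (hx : x < r) :
    qf r ((r - x) % r) = qf r x := by
  rcases Nat.eq_zero_or_pos x with h0 | h0
  · subst h0; simp [Nat.mod_self]
  · rw [Nat.mod_eq_of_lt (by omega)]
    unfold qf
    rw [Nat.cast_sub hx.le]
    ring

lemma qf_pair {r : ℕ} (hr : 0 < r) (b m : ℕ) :
    qf r (b % r) ≤ qf r ((b * m) % r) + qf r ((b * (m + 1)) % r) := by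
  set x := (b * m) % r with hxdef
  have hxr : x < r := Nat.mod_lt _ hr
  have key : ((r - x) + b * (m + 1)) % r = b % r := by
    have hdm : r * (b * m / r) + x = b * m := Nat.div_add_mod (b * m) r
    have h2 : (r - x) + b * (m + 1) = b + r * (b * m / r + 1) := by
      have hb : b * (m + 1) = b * m + b := by ring
      have hr2 : r * (b * m / r + 1) = r * (b * m / r) + r := by ring
      omega
    rw [h2, Nat.add_mul_mod_self_left]
  calc qf r (b % r) = qf r (((r - x) + b * (m + 1)) % r) := by rw [key]
    _ ≤ qf r ((r - x) % r) + qf r ((b * (m + 1)) % r) := qf_mod_core hr _ _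
    _ = qf r x + qf r ((b * (m + 1)) % r) := by rw [qf_symm hr hxr]
    _ = qf r ((b * m) % r) + qf r ((b * (m + 1)) % r) := by rw [hxdef]

lemma reidL_eq (r b m : ℕ) : reidL r b m = ∑ j ∈ Finset.range m, qf r ((b * j) % r) := rfl

lemma reidL_two {r : ℕ} (hr : 0 < r) (b : ℕ) : reidL r b 2 = qf r (b % r) := by
  rw [reidL_eq]
  rw [Finset.sum_range_succ, Finset.sum_range_one]
  simp [qf, Nat.mod_eq_of_lt hr]

lemma l_step (Q : Basket) (m : ℕ) : Q.l 2 + Q.l m ≤ Q.l (m + 2) := by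
  have hr : 0 < Q.r := by have := Q.two_le_r; omega
  unfold Basket.l
  rw [reidL_two hr, reidL_eq, reidL_eq, Finset.sum_range_succ, Finset.sum_range_succ]
  have := qf_pair hr Q.binv m
  linarith

lemma sum_l_step (D : FormalDatum) (m : ℕ) :
    (D.B.map (fun Q => Q.l 2)).sum + (D.B.map (fun Q => Q.l m)).sum
      ≤ (D.B.map (fun Q => Q.l (m + 2))).sum := by
  rw [← Multiset.sum_map_add]
  exact Multiset.sum_map_le_sum_map _ _ (fun Q _ => l_step Q m)

lemma P_step (D : FormalDatum) (h2 : 1 ≤ D.P 2) (m : ℕ) (hm : 1 ≤ m) :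
    D.P m < D.P (m + 2) := by
  have hS := sum_l_step D m
  have hK := D.K_pos
  have hmq : (1:ℚ) ≤ m := by exact_mod_cast hm
  have hP2 : D.P 2 = (1/2) * D.K - 3 + (D.B.map (fun Q => Q.l 2)).sum := by
    simp only [FormalDatum.P]; push_cast; ring_nf
  have hS2 : 4 - D.K / 2 ≤ (D.B.map (fun Q => Q.l 2)).sum := by
    rw [hP2] at h2; linarith
  have hprod : (0:ℚ) < ((m:ℚ) * m + m) * D.K := by
    have : (0:ℚ) < (m:ℚ) * m + m := by nlinarith
    exact mul_pos this hK
  simp only [FormalDatum.P]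
  push_cast
  nlinarith [hS, hS2, hprod]

theorem formal_P_even_ge' (D : FormalDatum)
    (hint : ∀ m : ℕ, 2 ≤ m → ∃ k : ℕ, D.P m = (k : ℚ))
    (h2 : 1 ≤ D.P 2) :
    ∀ n : ℕ, 2 ≤ n → (n : ℚ) ≤ D.P (2 * n) := by
  have step : ∀ m : ℕ, 2 ≤ m → D.P m + 1 ≤ D.P (m + 2) := by
    intro m hm
    obtain ⟨k1, hk1⟩ := hint m hm
    obtain ⟨k2, hk2⟩ := hint (m + 2) (by omega)
    have hlt := P_step D h2 m (by omega)
    rw [hk1, hk2] at hlt ⊢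
    have : k1 < k2 := by exact_mod_cast hlt
    have : (k1:ℚ) + 1 ≤ k2 := by exact_mod_cast this
    linarith
  have key : ∀ n : ℕ, 1 ≤ n → (n : ℚ) ≤ D.P (2 * n) := by
    intro n hn
    induction n, hn using Nat.le_induction with
    | base => simpa using h2
    | succ n hn ih =>
        have h1 : 2 * (n + 1) = 2 * n + 2 := by ring
        have h2' := step (2 * n) (by omega)
        rw [h1]
        push_cast
        linarith
  exact fun n hn => key n (by omega)

/-- If the formal plurigenera of a formal basket datum with `χ = 1` are
non-negative integers and `P(2) ≥ 1`, then `P(2n) ≥ n` for all `n ≥ 2`. -/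
theorem formal_P_even_ge (D : FormalDatum)
    (hint : ∀ m : ℕ, 2 ≤ m → ∃ k : ℕ, D.P m = (k : ℚ))
    (h2 : 1 ≤ D.P 2) :
    ∀ n : ℕ, 2 ≤ n → (n : ℚ) ≤ D.P (2 * n) :=
  formal_P_even_ge' D hint h2
end

section
/- Let B be a finite multiset of baskets, each of index r ≤ 25, such that ∑_{Q ∈ B} Δ₂(Q) = 10, ∑_{Q ∈ B} (Δ₃(Q) + Δ₄(Q)) = 71, and ∑_{Q ∈ B} (Δ₅(Q) + Δ₆(Q) + ⋯ + Δ₁₄(Q)) = 2935. Then, up to the identification of 1/r(a, -a, 1) with 1/r(r-a, -(r-a), 1), B is one of the following five multisets: (xii) one basket 1/10(7,-7,1), two baskets 1/5(3,-3,1) and three baskets 1/2(1,-1,1); (xiii) one basket 1/4(3,-3,1), two baskets 1/8(5,-5,1) and three baskets 1/2(1,-1,1); (xiv) two baskets 1/3(2,-2,1), one basket 1/4(3,-3,1), one basket 1/12(7,-7,1) and two baskets 1/2(1,-1,1); (xv) three baskets 1/3(2,-2,1), one basket 1/5(4,-4,1), one basket 1/5(3,-3,1) and four baskets 1/2(1,-1,1);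 (xvi) four baskets 1/3(2,-2,1), one basket 1/6(5,-5,1) and five baskets 1/2(1,-1,1). In each case ∑_{Q ∈ B} l(Q, 2) ≥ 3. -/
set_option maxRecDepth 100000
set_option maxHeartbeats 4000000


/-- Two baskets `1/r(a,-a,1)` and `1/r(r-a,-(r-a),1)` are identified. -/
def bequiv (Q Q' : Basket) : Prop :=
  Q.r = Q'.r ∧ (Q.a = Q'.a ∨ Q.a + Q'.a = Q.r)

/-- The basket `1/2(1,-1,1)`. -/
def bk2 : Basket := ⟨2, 1, by norm_num, by norm_num, by norm_num, by decide⟩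
/-- The basket `1/3(2,-2,1)`. -/
def bk3 : Basket := ⟨3, 2, by norm_num, by norm_num, by norm_num, by decide⟩
/-- The basket `1/4(3,-3,1)`. -/
def bk4 : Basket := ⟨4, 3, by norm_num, by norm_num, by norm_num, by decide⟩
/-- The basket `1/5(4,-4,1)`. -/
def bk5_4 : Basket := ⟨5, 4, by norm_num, by norm_num, by norm_num, by decide⟩
/-- The basket `1/5(3,-3,1)`. -/
def bk5_3 : Basket := ⟨5, 3, by norm_num, by norm_num, by norm_num, by decide⟩
/-- The basket `1/6(5,-5,1)`. -/
def bk6 : Basket := ⟨6, 5, by norm_num, by norm_num, by norm_num, by decide⟩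
/-- The basket `1/8(5,-5,1)`. -/
def bk8_5 : Basket := ⟨8, 5, by norm_num, by norm_num, by norm_num, by decide⟩
/-- The basket `1/10(7,-7,1)`. -/
def bk10_7 : Basket := ⟨10, 7, by norm_num, by norm_num, by norm_num, by decide⟩
/-- The basket `1/12(7,-7,1)`. -/
def bk12_7 : Basket := ⟨12, 7, by norm_num, by norm_num, by norm_num, by decide⟩

abbrev T3 := ℕ × ℕ × ℕ

def enum : List T3 → ℕ → ℕ → ℕ → List (Multiset T3)
  | [], s1, s2, s3 => if s1 = 0 ∧ s2 = 0 ∧ s3 = 0 then [0] else []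
  | c :: cs, s1, s2, s3 =>
      if 6*s1 ≤ s2 ∧ s2 ≤ 9*s1 ∧ 245*s1 ≤ s3 ∧ s3 ≤ 445*s1 ∧ 122*s2 ≤ 3*s3 ∧ 9*s3 ≤ 445*s2 then
        (List.range (s1+1)).flatMap (fun k =>
          if k*c.1 ≤ s1 ∧ k*c.2.1 ≤ s2 ∧ k*c.2.2 ≤ s3 then
            (enum cs (s1 - k*c.1) (s2 - k*c.2.1) (s3 - k*c.2.2)).map
              (fun M => Multiset.replicate k c + M)
          else [])
      else []

def good (c : T3) : Prop :=
  1 ≤ c.1 ∧ 6*c.1 ≤ c.2.1 ∧ c.2.1 ≤ 9*c.1 ∧ 245*c.1 ≤ c.2.2 ∧ c.2.2 ≤ 445*c.1 ∧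
    122*c.2.1 ≤ 3*c.2.2 ∧ 9*c.2.2 ≤ 445*c.2.1

instance : DecidablePred good := fun c => by unfold good; infer_instance

theorem enum_sound (cs : List T3) (M : Multiset T3)
    (hall : ∀ c ∈ cs, good c) (hmem : ∀ x ∈ M, x ∈ cs) :
    M ∈ enum cs (M.map (·.1)).sum (M.map (·.2.1)).sum (M.map (·.2.2)).sum := by
  induction cs generalizing M with
  | nil =>
      have hM : M = 0 := Multiset.eq_zero_of_forall_notMem (by simpa using hmem)
      subst hM; simp [enum]
  | cons c cs ih =>
      -- the prune condition holds
      have hgood : ∀ x ∈ M, good x := fun x hx => hall x (hmem x hx)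
      have key : ∀ (u v : ℕ) (f g : T3 → ℕ), (∀ x ∈ M, u * f x ≤ v * g x) →
          u * (M.map f).sum ≤ v * (M.map g).sum := by
        intro u v f g h
        rw [← Multiset.sum_map_mul_left, ← Multiset.sum_map_mul_left]
        exact Multiset.sum_map_le_sum_map _ _ h
      have hprune : 6*(M.map (·.1)).sum ≤ (M.map (·.2.1)).sum ∧
          (M.map (·.2.1)).sum ≤ 9*(M.map (·.1)).sum ∧
          245*(M.map (·.1)).sum ≤ (M.map (·.2.2)).sum ∧
          (M.map (·.2.2)).sum ≤ 445*(M.map (·.1)).sum ∧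
          122*(M.map (·.2.1)).sum ≤ 3*(M.map (·.2.2)).sum ∧
          9*(M.map (·.2.2)).sum ≤ 445*(M.map (·.2.1)).sum := by
        refine ⟨?_, ?_, ?_, ?_, ?_, ?_⟩
        · simpa using key 6 1 (·.1) (·.2.1) (fun x hx => by simpa using (hgood x hx).2.1)
        · simpa using key 1 9 (·.2.1) (·.1) (fun x hx => by simpa using (hgood x hx).2.2.1)
        · simpa using key 245 1 (·.1) (·.2.2) (fun x hx => by simpa using (hgood x hx).2.2.2.1)
        · simpa using key 1 445 (·.2.2) (·.1) (fun x hx => by simpa using (hgood x hx).2.2.2.2.1)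
        · exact key 122 3 (·.2.1) (·.2.2) (fun x hx => (hgood x hx).2.2.2.2.2.1)
        · exact key 9 445 (·.2.2) (·.2.1) (fun x hx => (hgood x hx).2.2.2.2.2.2)
      set k := M.count c with hk
      have hdecomp : M = Multiset.replicate k c + M.filter (fun x => ¬ x = c) := by
        conv_lhs => rw [← Multiset.filter_add_not (fun x => x = c) M]
        congr 1
        rw [Multiset.filter_eq']
      set M' := M.filter (fun x => ¬ x = c) with hM'
      have hmem' : ∀ x ∈ M', x ∈ cs := by
        intro x hx
        have hxc : ¬ x = c := (Multiset.mem_filter.mp hx).2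
        have := hmem x (Multiset.mem_filter.mp hx).1
        simp at this
        tauto
      have ihM' := ih M' (fun c hc => hall c (List.mem_cons_of_mem _ hc)) hmem'
      -- sums decompose
      have hsum : ∀ f : T3 → ℕ, (M.map f).sum = k * f c + (M'.map f).sum := by
        intro f
        conv_lhs => rw [hdecomp]
        simp [Multiset.map_add, Multiset.sum_add, Multiset.map_replicate, Multiset.sum_replicate,
          smul_eq_mul]
      rw [enum]
      rw [if_pos hprune]
      rw [List.mem_flatMap]
      refine ⟨k, ?_, ?_⟩
      · rw [List.mem_range]
        have h1 : k * c.1 ≤ (M.map (·.1)).sum := by rw [hsum]; omega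
        have hc1 : 1 ≤ c.1 := (hall c List.mem_cons_self).1
        have : k ≤ k * c.1 := Nat.le_mul_of_pos_right k hc1
        omega
      · have hle1 : k * c.1 ≤ (M.map (·.1)).sum := by rw [hsum (·.1)]; omega
        have hle2 : k * c.2.1 ≤ (M.map (·.2.1)).sum := by rw [hsum (·.2.1)]; omega
        have hle3 : k * c.2.2 ≤ (M.map (·.2.2)).sum := by rw [hsum (·.2.2)]; omega
        rw [if_pos ⟨hle1, hle2, hle3⟩, List.mem_map]
        refine ⟨M', ?_, ?_⟩
        · have e1 : (M.map (·.1)).sum - k * c.1 = (M'.map (·.1)).sum := by rw [hsum (·.1)]; omega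
          have e2 : (M.map (·.2.1)).sum - k * c.2.1 = (M'.map (·.2.1)).sum := by
            rw [hsum (·.2.1)]; omega
          have e3 : (M.map (·.2.2)).sum - k * c.2.2 = (M'.map (·.2.2)).sum := by
            rw [hsum (·.2.2)]; omega
          rw [e1, e2, e3]; exact ihM'
        · exact hdecomp.symm
def fullList : List T3 := [(12,74,3050), (11,72,3013), (11,70,2914), (11,68,2805), (10,66,2765), (10,62,2560), (9,68,2817), (9,64,2679), (9,62,2601), (9,58,2421), (9,56,2315), (8,65,2657), (8,62,2550), (8,58,2422), (8,54,2266), (8,50,2070), (7,60,2461), (7,59,2422), (7,58,2379), (7,57,2331), (7,54,2224), (7,52,2162), (7,50,2092), (7,48,2014), (7,46,1926), (7,44,1825), (6,54,2224), (6,53,2163), (6,49,2005), (6,46,1898), (6,38,1580), (5,45,1930), (5,45,1909), (5,45,1885), (5,45,1858), (5,44,1797), (5,43,1763), (5,42,1724), (5,41,1679), (5,38,1572), (5,36,1505), (5,34,1427), (5,32,1334), (4,36,1636), (4,36,1609), (4,36,1577), (4,36,1540), (4,36,1492), (4,35,1431), (4,33,1353), (4,30,1245), (4,26,1087), (3,27,1278),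 (3,27,1265), (3,27,1258), (3,27,1241), (3,27,1230), (3,27,1203), (3,27,1187), (3,27,1150), (3,27,1126), (3,26,1065), (3,25,1026), (3,22,917), (3,20,839), (2,18,886), (2,18,881), (2,18,874), (2,18,865), (2,18,854), (2,18,841), (2,18,824), (2,18,797), (2,18,759), (2,17,698), (2,14,587), (1,9,445), (1,9,444), (1,9,442), (1,9,439), (1,9,435), (1,9,430), (1,9,424), (1,9,417), (1,9,406), (1,9,390), (1,9,366), (1,8,326), (1,6,245)]

def m1 : Multiset T3 := (1,9,406) ::ₘ Multiset.replicate 4 (1,8,326) + Multiset.replicate 5 (1,6,245)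
def m2 : Multiset T3 := (2,14,587) ::ₘ (1,9,390) ::ₘ Multiset.replicate 3 (1,8,326) + Multiset.replicate 4 (1,6,245)
def m3 : Multiset T3 := Multiset.replicate 2 (3,22,917) + ((1,9,366) ::ₘ Multiset.replicate 3 (1,6,245))
def m4 : Multiset T3 := (3,25,1026) ::ₘ Multiset.replicate 2 (2,14,587) + Multiset.replicate 3 (1,6,245)
def m5 : Multiset T3 := (5,34,1427) ::ₘ (1,9,366) ::ₘ Multiset.replicate 2 (1,8,326) + Multiset.replicate 2 (1,6,245)

theorem fullList_good : ∀ c ∈ fullList, good c := by decide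

theorem enum_eval : enum fullList 10 71 2935 = [m1, m2, m3, m4, m5] := by decide

/-! ### Per-basket computations -/

def Dnat (r b n : ℕ) : ℕ :=
  (n^2 * ((b*1 % r) * (r - b*1 % r)) - (b*n % r) * (r - b*n % r)) / (2*r)

def checkD (r b n : ℕ) : Bool :=
  n^2 * ((b*1 % r) * (r - b*1 % r)) == (b*n % r) * (r - b*n % r) + 2*r*(Dnat r b n)

def tagOf (r b : ℕ) : T3 :=
  (Dnat r b 2, Dnat r b 3 + Dnat r b 4,
   Dnat r b 5 + Dnat r b 6 + Dnat r b 7 + Dnat r b 8 + Dnat r b 9 + Dnat r b 10 +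
     Dnat r b 11 + Dnat r b 12 + Dnat r b 13 + Dnat r b 14)

def tag (Q : Basket) : T3 :=
  ((Q.delta 2).num.toNat, (Q.delta 3 + Q.delta 4).num.toNat,
   (∑ i ∈ Finset.Icc 5 14, Q.delta i).num.toNat)

def inv' (r a : ℕ) : ℕ := ((List.range r).filter (fun b => a * b % r == 1)).headD 0

def winners : List (T3 × ℕ × ℕ × ℕ) :=
  [((1,6,245),2,1,1), ((1,8,326),3,1,2), ((1,9,366),4,1,3), ((1,9,390),5,1,4),
   ((1,9,406),6,1,5), ((2,14,587),5,2,3), ((3,22,917),8,3,5), ((3,25,1026),10,3,7),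
   ((5,34,1427),12,5,7)]

def bigcheck (r a : ℕ) : Bool :=
  let b := inv' r a
  decide (b < r) && decide (a * b % r = 1) &&
  ([2,3,4,5,6,7,8,9,10,11,12,13,14].all (fun n => checkD r b n)) &&
  decide (tagOf r b ∈ fullList) &&
  winners.all (fun w => !(tagOf r b == w.1) ||
    (decide (r = w.2.1) && (decide (b = w.2.2.1) || decide (b + w.2.2.1 = r)) &&
     (decide (a = w.2.2.2) || decide (a + w.2.2.2 = r))))

theorem bigcheck_all_bool : ((List.range 26).all fun r => (List.range r).all fun a =>
    (List.range r).all fun b => !(a*b % r == 1) || bigcheck r a) = true := by decide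

theorem bigcheck_all : ∀ r < 26, ∀ a < r, ∀ b < r, a * b % r = 1 →
    bigcheck r a = true := by
  intro r hr a ha b hb hab
  have h := bigcheck_all_bool
  simp only [List.all_eq_true, List.mem_range, Bool.or_eq_true, Bool.not_eq_true',
    beq_eq_false_iff_ne, ne_eq] at h
  rcases h r hr a ha b hb with h' | h'
  · exact absurd hab h'
  · exact h'

theorem binv_eq (Q : Basket) (b : ℕ) (hb : b < Q.r) (hab : Q.a * b % Q.r = 1) :
    Q.binv = b := by
  haveI : NeZero Q.r := ⟨by have := Q.two_le_r; omega⟩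
  have h1 : (Q.a : ZMod Q.r) * (b : ZMod Q.r) = 1 := by
    have := congrArg (Nat.cast : ℕ → ZMod Q.r) hab
    rw [ZMod.natCast_mod, Nat.cast_mul, Nat.cast_one] at this
    exact this
  have hu : IsUnit (Q.a : ZMod Q.r) := IsUnit.of_mul_eq_one _ h1
  have h2 : (Q.a : ZMod Q.r)⁻¹ = (b : ZMod Q.r) := by
    calc (Q.a : ZMod Q.r)⁻¹ = (Q.a : ZMod Q.r)⁻¹ * ((Q.a : ZMod Q.r) * b) := by
          rw [h1, mul_one]
      _ = ((Q.a : ZMod Q.r)⁻¹ * (Q.a : ZMod Q.r)) * b := by ring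
      _ = b := by rw [ZMod.inv_mul_of_unit _ hu, one_mul]
  unfold Basket.binv
  rw [h2, ZMod.val_cast_of_lt hb]

theorem binv_spec (Q : Basket) : Q.binv < Q.r ∧ Q.a * Q.binv % Q.r = 1 := by
  haveI : NeZero Q.r := ⟨by have := Q.two_le_r; omega⟩
  haveI : Fact (1 < Q.r) := ⟨by have := Q.two_le_r; omega⟩
  have hu : IsUnit (Q.a : ZMod Q.r) := (ZMod.isUnit_iff_coprime _ _).2 Q.coprime
  have h1 : ((Q.a : ZMod Q.r) * (Q.a : ZMod Q.r)⁻¹).val = 1 := by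
    rw [ZMod.mul_inv_of_unit _ hu, ZMod.val_one]
  rw [ZMod.val_mul, ZMod.val_natCast, Nat.mod_eq_of_lt Q.a_lt_r] at h1
  exact ⟨ZMod.val_lt _, h1⟩

theorem reidL_succ (r b m : ℕ) : reidL r b (m+1) = reidL r b m +
    (((b*m % r : ℕ)):ℚ) * ((r:ℚ) - ((b*m % r : ℕ):ℚ)) / (2*r) := by
  unfold reidL
  rw [Finset.sum_range_succ]

theorem reidL_two_s14 (r b : ℕ) : reidL r b 2 =
    ((b*1 % r : ℕ):ℚ) * ((r:ℚ) - ((b*1 % r : ℕ):ℚ)) / (2*r) := by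
  rw [show (2:ℕ) = 1+1 from rfl, reidL_succ]
  simp [reidL]

theorem delta_eq (Q : Basket) (b n d : ℕ) (hb : Q.binv = b)
    (h : n^2 * ((b*1 % Q.r) * (Q.r - b*1 % Q.r)) =
      (b*n % Q.r) * (Q.r - b*n % Q.r) + 2*Q.r*d) :
    Q.delta n = (d : ℚ) := by
  have hr : 0 < Q.r := by have := Q.two_le_r; omega
  have hrQ : (0:ℚ) < (Q.r:ℚ) := by exact_mod_cast hr
  have hc1 : b*1 % Q.r < Q.r := Nat.mod_lt _ hr
  have hcn : b*n % Q.r < Q.r := Nat.mod_lt _ hr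
  have hQ : (n:ℚ)^2 * (((b*1 % Q.r : ℕ):ℚ) * ((Q.r:ℚ) - ((b*1 % Q.r : ℕ):ℚ))) =
      ((b*n % Q.r : ℕ):ℚ) * ((Q.r:ℚ) - ((b*n % Q.r : ℕ):ℚ)) + 2*(Q.r:ℚ)*d := by
    have hcast := congrArg (Nat.cast : ℕ → ℚ) h
    push_cast [Nat.cast_sub hc1.le, Nat.cast_sub hcn.le] at hcast
    linarith [hcast]
  simp only [mul_one] at hQ
  unfold Basket.delta Basket.l
  rw [hb, reidL_two_s14, reidL_succ]
  simp only [mul_one]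
  field_simp
  linarith [hQ]

theorem sum_Icc_5_14 (f : ℕ → ℚ) : ∑ i ∈ Finset.Icc 5 14, f i =
    f 5 + f 6 + f 7 + f 8 + f 9 + f 10 + f 11 + f 12 + f 13 + f 14 := by
  rw [show (14:ℕ) = 13 + 1 from rfl, ← Finset.Ico_add_one_right_eq_Icc, Finset.sum_Ico_eq_sum_range]
  norm_num [Finset.sum_range_succ]

theorem basket_info (Q : Basket) (h25 : Q.r ≤ 25) :
    Q.binv = inv' Q.r Q.a ∧ inv' Q.r Q.a < Q.r ∧
    Q.delta 2 = ((tagOf Q.r (inv' Q.r Q.a)).1 : ℚ) ∧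
    Q.delta 3 + Q.delta 4 = ((tagOf Q.r (inv' Q.r Q.a)).2.1 : ℚ) ∧
    (∑ i ∈ Finset.Icc 5 14, Q.delta i) = ((tagOf Q.r (inv' Q.r Q.a)).2.2 : ℚ) ∧
    tag Q = tagOf Q.r (inv' Q.r Q.a) ∧
    tagOf Q.r (inv' Q.r Q.a) ∈ fullList ∧
    (∀ w ∈ winners, tagOf Q.r (inv' Q.r Q.a) = w.1 →
      Q.r = w.2.1 ∧ (inv' Q.r Q.a = w.2.2.1 ∨ inv' Q.r Q.a + w.2.2.1 = Q.r) ∧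
        (Q.a = w.2.2.2 ∨ Q.a + w.2.2.2 = Q.r)) := by
  obtain ⟨hblt, habm⟩ := binv_spec Q
  have hch := bigcheck_all Q.r (by omega) Q.a Q.a_lt_r Q.binv hblt habm
  rw [bigcheck] at hch
  simp only [Bool.and_eq_true, decide_eq_true_eq, List.all_eq_true, Bool.or_eq_true,
    Bool.not_eq_true', beq_eq_false_iff_ne, ne_eq, beq_iff_eq] at hch
  obtain ⟨⟨⟨⟨hlt', heq'⟩, hcheckD⟩, hmem⟩, hwin⟩ := hch
  have hb : Q.binv = inv' Q.r Q.a := binv_eq Q _ hlt' heq'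
  have hD : ∀ n ∈ ([2,3,4,5,6,7,8,9,10,11,12,13,14] : List ℕ),
      Q.delta n = (Dnat Q.r (inv' Q.r Q.a) n : ℚ) := by
    intro n hn
    have := hcheckD n hn
    rw [checkD] at this
    exact delta_eq Q _ n _ hb (by simpa using this)
  have hd2 := hD 2 (by simp)
  have hd3 := hD 3 (by simp); have hd4 := hD 4 (by simp)
  have hd5 := hD 5 (by simp); have hd6 := hD 6 (by simp)
  have hd7 := hD 7 (by simp); have hd8 := hD 8 (by simp)
  have hd9 := hD 9 (by simp); have hd10 := hD 10 (by simp)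
  have hd11 := hD 11 (by simp); have hd12 := hD 12 (by simp)
  have hd13 := hD 13 (by simp); have hd14 := hD 14 (by simp)
  have h34 : Q.delta 3 + Q.delta 4 = ((tagOf Q.r (inv' Q.r Q.a)).2.1 : ℚ) := by
    rw [hd3, hd4, tagOf]; push_cast; ring
  have h514 : (∑ i ∈ Finset.Icc 5 14, Q.delta i) =
      ((tagOf Q.r (inv' Q.r Q.a)).2.2 : ℚ) := by
    rw [sum_Icc_5_14, hd5, hd6, hd7, hd8, hd9, hd10, hd11, hd12, hd13, hd14, tagOf]
    push_cast; ring
  have htag : tag Q = tagOf Q.r (inv' Q.r Q.a) := by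
    rw [tag, hd2, h34, h514]
    simp only [Rat.num_natCast, Int.toNat_natCast]
    rfl
  refine ⟨hb, hlt', hd2, h34, h514, htag, hmem, fun w hw hweq => ?_⟩
  have := hwin w hw
  tauto

/-! ### Final assembly helpers -/

def lval : T3 → ℚ := fun t =>
  if t = (1,6,245) then 1/4 else if t = (1,8,326) then 1/3 else if t = (1,9,366) then 3/8
  else if t = (1,9,390) then 2/5 else if t = (1,9,406) then 5/12
  else if t = (2,14,587) then 3/5 else if t = (3,22,917) then 15/16
  else if t = (3,25,1026) then 21/20 else 35/24

theorem rel_of_map_eq {α β γ : Type*} [DecidableEq β] (R : α → β → Prop) (f : α → γ) (g : β → γ)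
    (M : Multiset α) :
    ∀ (N : Multiset β), (∀ x ∈ M, ∀ y ∈ N, f x = g y → R x y) →
      M.map f = N.map g → Multiset.Rel R M N := by
  induction M using Multiset.induction with
  | empty =>
      intro N _ heq
      have : N = 0 := by
        have := heq.symm
        simpa using this
      simp [this]
  | cons a M ih =>
      intro N h heq
      have hfa : f a ∈ N.map g := by rw [← heq]; simp
      obtain ⟨y, hyN, hgy⟩ := Multiset.mem_map.mp hfa
      have hR : R a y := h a (by simp) y hyN hgy.symm
      have hN : N = y ::ₘ N.erase y := (Multiset.cons_erase hyN).symm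
      rw [hN]
      refine Multiset.Rel.cons hR (ih (N.erase y) ?_ ?_)
      · intro x hx y' hy' hxy
        exact h x (by simp [hx]) y' (Multiset.mem_of_mem_erase hy') hxy
      · rw [hN] at heq
        simp only [Multiset.map_cons] at heq
        rw [← hgy] at heq
        exact (Multiset.cons_inj_right _).mp heq

theorem tag_bk2 : tag bk2 = (1,6,245) := by
  have h := (basket_info bk2 (by decide)).2.2.2.2.2.1
  exact h.trans (by decide)

theorem tag_bk3 : tag bk3 = (1,8,326) := by
  have h := (basket_info bk3 (by decide)).2.2.2.2.2.1
  exact h.trans (by decide)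

theorem tag_bk4 : tag bk4 = (1,9,366) := by
  have h := (basket_info bk4 (by decide)).2.2.2.2.2.1
  exact h.trans (by decide)

theorem tag_bk5_4 : tag bk5_4 = (1,9,390) := by
  have h := (basket_info bk5_4 (by decide)).2.2.2.2.2.1
  exact h.trans (by decide)

theorem tag_bk6 : tag bk6 = (1,9,406) := by
  have h := (basket_info bk6 (by decide)).2.2.2.2.2.1
  exact h.trans (by decide)

theorem tag_bk5_3 : tag bk5_3 = (2,14,587) := by
  have h := (basket_info bk5_3 (by decide)).2.2.2.2.2.1
  exact h.trans (by decide)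

theorem tag_bk8_5 : tag bk8_5 = (3,22,917) := by
  have h := (basket_info bk8_5 (by decide)).2.2.2.2.2.1
  exact h.trans (by decide)

theorem tag_bk10_7 : tag bk10_7 = (3,25,1026) := by
  have h := (basket_info bk10_7 (by decide)).2.2.2.2.2.1
  exact h.trans (by decide)

theorem tag_bk12_7 : tag bk12_7 = (5,34,1427) := by
  have h := (basket_info bk12_7 (by decide)).2.2.2.2.2.1
  exact h.trans (by decide)

/-- Classification of finite multisets of baskets of index `≤ 25` with
`∑ Δ₂ = 10`, `∑(Δ₃+Δ₄) = 71` and `∑(Δ₅+⋯+Δ₁₄) = 2935`: up to the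
identification `a ↔ r - a`, the multiset is one of the five listed ones,
and in each case `∑ l(Q,2) ≥ 3`. -/
theorem basket_classification_2935 (B : Multiset Basket)
    (hr : ∀ Q ∈ B, Q.r ≤ 25)
    (h1 : (B.map (fun Q => Q.delta 2)).sum = 10)
    (h2 : (B.map (fun Q => Q.delta 3 + Q.delta 4)).sum = 71)
    (h3 : (B.map (fun Q => ∑ i ∈ Finset.Icc 5 14, Q.delta i)).sum = 2935) :
    (Multiset.Rel bequiv B
        ({bk10_7} + Multiset.replicate 2 bk5_3 + Multiset.replicate 3 bk2) ∨
     Multiset.Rel bequiv B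
        ({bk4} + Multiset.replicate 2 bk8_5 + Multiset.replicate 3 bk2) ∨
     Multiset.Rel bequiv B
        (Multiset.replicate 2 bk3 + {bk4, bk12_7} + Multiset.replicate 2 bk2) ∨
     Multiset.Rel bequiv B
        (Multiset.replicate 3 bk3 + {bk5_4, bk5_3} + Multiset.replicate 4 bk2) ∨
     Multiset.Rel bequiv B
        (Multiset.replicate 4 bk3 + {bk6} + Multiset.replicate 5 bk2)) ∧
    3 ≤ (B.map (fun Q => Q.l 2)).sum := by
  classical
  have info := fun Q (hQ : Q ∈ B) => basket_info Q (hr Q hQ)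
  set M : Multiset T3 := B.map tag with hM
  have hmemM : ∀ x ∈ M, x ∈ fullList := by
    intro x hx
    rw [hM] at hx
    obtain ⟨Q, hQ, rfl⟩ := Multiset.mem_map.mp hx
    rw [(info Q hQ).2.2.2.2.2.1]
    exact (info Q hQ).2.2.2.2.2.2.1
  have key : ∀ (f : Basket → ℚ) (g : T3 → ℕ), (∀ Q ∈ B, f Q = ((g (tag Q) : ℕ) : ℚ)) →
      ∀ s : ℕ, (B.map f).sum = (s : ℚ) → (M.map g).sum = s := by
    intro f g hfg s hsum
    have e : B.map f = (M.map g).map (fun n : ℕ => (n : ℚ)) := by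
      rw [hM]
      simp only [Multiset.map_map]
      exact Multiset.map_congr rfl hfg
    rw [e, ← Nat.cast_multiset_sum] at hsum
    exact_mod_cast hsum
  have hs1 : (M.map (·.1)).sum = 10 := by
    refine key _ _ (fun Q hQ => ?_) 10 (by exact_mod_cast h1)
    rw [(info Q hQ).2.2.2.2.2.1]
    exact (info Q hQ).2.2.1
  have hs2 : (M.map (·.2.1)).sum = 71 := by
    refine key _ _ (fun Q hQ => ?_) 71 (by exact_mod_cast h2)
    rw [(info Q hQ).2.2.2.2.2.1]
    exact (info Q hQ).2.2.2.1
  have hs3 : (M.map (·.2.2)).sum = 2935 := by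
    refine key _ _ (fun Q hQ => ?_) 2935 (by exact_mod_cast h3)
    rw [(info Q hQ).2.2.2.2.2.1]
    exact (info Q hQ).2.2.2.2.1
  have hM5 : M = m1 ∨ M = m2 ∨ M = m3 ∨ M = m4 ∨ M = m5 := by
    have h := enum_sound fullList M fullList_good hmemM
    rw [hs1, hs2, hs3, enum_eval] at h
    simpa using h
  have hwinB : ∀ Q ∈ B, ∀ w ∈ winners, tag Q = w.1 →
      Q.r = w.2.1 ∧ (Q.binv = w.2.2.1 ∨ Q.binv + w.2.2.1 = Q.r) ∧
        (Q.a = w.2.2.2 ∨ Q.a + w.2.2.2 = Q.r) := by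
    intro Q hQ w hw ht
    obtain ⟨hb, -, -, -, -, htag, -, hwin⟩ := info Q hQ
    have h := hwin w hw (htag.symm.trans ht)
    rw [← hb] at h
    exact h
  have hl2 : ∀ Q ∈ B, ∀ w ∈ winners, tag Q = w.1 → Q.l 2 = lval w.1 := by
    intro Q hQ w hw ht
    obtain ⟨hrw, hbw, -⟩ := hwinB Q hQ w hw ht
    simp only [winners, List.mem_cons, List.not_mem_nil, or_false] at hw
    rcases hw with rfl|rfl|rfl|rfl|rfl|rfl|rfl|rfl|rfl <;>
      simp only at hrw hbw ⊢ <;>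
      [ (have hb : Q.binv = 1 := by omega);
        (rcases (show Q.binv = 1 ∨ Q.binv = 2 by omega) with hb | hb);
        (rcases (show Q.binv = 1 ∨ Q.binv = 3 by omega) with hb | hb);
        (rcases (show Q.binv = 1 ∨ Q.binv = 4 by omega) with hb | hb);
        (rcases (show Q.binv = 1 ∨ Q.binv = 5 by omega) with hb | hb);
        (rcases (show Q.binv = 2 ∨ Q.binv = 3 by omega) with hb | hb);
        (rcases (show Q.binv = 3 ∨ Q.binv = 5 by omega) with hb | hb);
        (rcases (show Q.binv = 3 ∨ Q.binv = 7 by omega) with hb | hb);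
        (rcases (show Q.binv = 5 ∨ Q.binv = 7 by omega) with hb | hb)] <;>
      (show reidL Q.r Q.binv 2 = _) <;> rw [hrw, hb] <;>
      norm_num [reidL, Finset.sum_range_succ, lval]
  have hl2M : ∀ (mi : Multiset T3), M = mi →
      (∀ t ∈ mi, ∃ w ∈ winners, w.1 = t) → (B.map (fun Q => Q.l 2)).sum = (mi.map lval).sum := by
    intro mi hMi hmi
    have e : B.map (fun Q => Q.l 2) = (M.map lval) := by
      rw [hM]
      simp only [Multiset.map_map]
      refine Multiset.map_congr rfl (fun Q hQ => ?_)
      have htQ : tag Q ∈ mi := by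
        rw [← hMi, hM]
        exact Multiset.mem_map_of_mem _ hQ
      obtain ⟨w, hw, hwt⟩ := hmi (tag Q) htQ
      have h' := hl2 Q hQ w hw hwt.symm
      rw [hwt] at h'
      exact h'
    rw [e, hMi]
  have hBT : ∀ (Ti : Multiset Basket) (mi : Multiset T3), M = mi → Ti.map tag = mi →
      (∀ y ∈ Ti, ∃ w ∈ winners, tag y = w.1 ∧ y.r = w.2.1 ∧ y.a = w.2.2.2) →
      Multiset.Rel bequiv B Ti := by
    intro Ti mi hMi hTi hTw
    refine rel_of_map_eq bequiv tag tag B Ti ?_ ?_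
    · intro x hx y hy hxy
      obtain ⟨w, hw, hyt, hyr, hya⟩ := hTw y hy
      obtain ⟨hxr, -, hxa⟩ := hwinB x hx w hw (hxy.trans hyt)
      refine ⟨hxr.trans hyr.symm, ?_⟩
      rw [hya]
      exact hxa
    · rw [← hM, hMi, hTi]
  rcases hM5 with hMi | hMi | hMi | hMi | hMi
  · -- m1 : four bk3, one bk6, five bk2  (disjunct 5)
    constructor
    · refine Or.inr (Or.inr (Or.inr (Or.inr (hBT _ m1 hMi ?_ ?_))))
      · simp only [Multiset.map_add, Multiset.map_replicate, Multiset.map_singleton,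
          tag_bk3, tag_bk6, tag_bk2]
        decide
      · intro y hy
        simp only [Multiset.mem_add, Multiset.mem_replicate, Multiset.mem_singleton,
          ne_eq, OfNat.ofNat_ne_zero, not_false_eq_true, true_and, or_assoc] at hy
        rcases hy with rfl | rfl | rfl
        · exact ⟨((1,8,326),3,1,2), by decide, tag_bk3, by decide, by decide⟩
        · exact ⟨((1,9,406),6,1,5), by decide, tag_bk6, by decide, by decide⟩
        · exact ⟨((1,6,245),2,1,1), by decide, tag_bk2, by decide, by decide⟩
    · rw [hl2M m1 hMi (by decide)]
      rw [show m1 = ((1,9,406) ::ₘ Multiset.replicate 4 (1,8,326) + Multiset.replicate 5 (1,6,245)) from rfl]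
      simp only [Multiset.map_add, Multiset.map_cons, Multiset.map_replicate,
        Multiset.sum_add, Multiset.sum_cons, Multiset.sum_replicate, smul_eq_mul]
      norm_num [lval]
  · -- m2 : three bk3, bk5_4, bk5_3, four bk2 (disjunct 4)
    constructor
    · refine Or.inr (Or.inr (Or.inr (Or.inl (hBT _ m2 hMi ?_ ?_))))
      · simp only [Multiset.map_add, Multiset.map_replicate, Multiset.insert_eq_cons,
          Multiset.map_cons, Multiset.map_singleton, tag_bk3, tag_bk5_4, tag_bk5_3, tag_bk2]
        decide
      · intro y hy
        simp only [Multiset.mem_add, Multiset.mem_replicate, Multiset.insert_eq_cons,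
          Multiset.mem_cons, Multiset.mem_singleton,
          ne_eq, OfNat.ofNat_ne_zero, not_false_eq_true, true_and, or_assoc] at hy
        rcases hy with rfl | rfl | rfl | rfl
        · exact ⟨((1,8,326),3,1,2), by decide, tag_bk3, by decide, by decide⟩
        · exact ⟨((1,9,390),5,1,4), by decide, tag_bk5_4, by decide, by decide⟩
        · exact ⟨((2,14,587),5,2,3), by decide, tag_bk5_3, by decide, by decide⟩
        · exact ⟨((1,6,245),2,1,1), by decide, tag_bk2, by decide, by decide⟩
    · rw [hl2M m2 hMi (by decide)]
      rw [show m2 = ((2,14,587) ::ₘ (1,9,390) ::ₘ Multiset.replicate 3 (1,8,326) + Multiset.replicate 4 (1,6,245)) from rfl]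
      simp only [Multiset.map_add, Multiset.map_cons, Multiset.map_replicate,
        Multiset.sum_add, Multiset.sum_cons, Multiset.sum_replicate, smul_eq_mul]
      norm_num [lval]
  · -- m3 : bk4, two bk8_5, three bk2 (disjunct 2)
    constructor
    · refine Or.inr (Or.inl (hBT _ m3 hMi ?_ ?_))
      · simp only [Multiset.map_add, Multiset.map_replicate, Multiset.map_singleton,
          tag_bk4, tag_bk8_5, tag_bk2]
        decide
      · intro y hy
        simp only [Multiset.mem_add, Multiset.mem_replicate, Multiset.mem_singleton,
          ne_eq, OfNat.ofNat_ne_zero, not_false_eq_true, true_and, or_assoc] at hy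
        rcases hy with rfl | rfl | rfl
        · exact ⟨((1,9,366),4,1,3), by decide, tag_bk4, by decide, by decide⟩
        · exact ⟨((3,22,917),8,3,5), by decide, tag_bk8_5, by decide, by decide⟩
        · exact ⟨((1,6,245),2,1,1), by decide, tag_bk2, by decide, by decide⟩
    · rw [hl2M m3 hMi (by decide)]
      rw [show m3 = (Multiset.replicate 2 (3,22,917) + ((1,9,366) ::ₘ Multiset.replicate 3 (1,6,245))) from rfl]
      simp only [Multiset.map_add, Multiset.map_cons, Multiset.map_replicate,
        Multiset.sum_add, Multiset.sum_cons, Multiset.sum_replicate, smul_eq_mul]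
      norm_num [lval]
  · -- m4 : bk10_7, two bk5_3, three bk2 (disjunct 1)
    constructor
    · refine Or.inl (hBT _ m4 hMi ?_ ?_)
      · simp only [Multiset.map_add, Multiset.map_replicate, Multiset.map_singleton,
          tag_bk10_7, tag_bk5_3, tag_bk2]
        decide
      · intro y hy
        simp only [Multiset.mem_add, Multiset.mem_replicate, Multiset.mem_singleton,
          ne_eq, OfNat.ofNat_ne_zero, not_false_eq_true, true_and, or_assoc] at hy
        rcases hy with rfl | rfl | rfl
        · exact ⟨((3,25,1026),10,3,7), by decide, tag_bk10_7, by decide, by decide⟩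
        · exact ⟨((2,14,587),5,2,3), by decide, tag_bk5_3, by decide, by decide⟩
        · exact ⟨((1,6,245),2,1,1), by decide, tag_bk2, by decide, by decide⟩
    · rw [hl2M m4 hMi (by decide)]
      rw [show m4 = ((3,25,1026) ::ₘ Multiset.replicate 2 (2,14,587) + Multiset.replicate 3 (1,6,245)) from rfl]
      simp only [Multiset.map_add, Multiset.map_cons, Multiset.map_replicate,
        Multiset.sum_add, Multiset.sum_cons, Multiset.sum_replicate, smul_eq_mul]
      norm_num [lval]
  · -- m5 : two bk3, bk4, bk12_7, two bk2 (disjunct 3)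
    constructor
    · refine Or.inr (Or.inr (Or.inl (hBT _ m5 hMi ?_ ?_)))
      · simp only [Multiset.map_add, Multiset.map_replicate, Multiset.insert_eq_cons,
          Multiset.map_cons, Multiset.map_singleton, tag_bk3, tag_bk4, tag_bk12_7, tag_bk2]
        decide
      · intro y hy
        simp only [Multiset.mem_add, Multiset.mem_replicate, Multiset.insert_eq_cons,
          Multiset.mem_cons, Multiset.mem_singleton,
          ne_eq, OfNat.ofNat_ne_zero, not_false_eq_true, true_and, or_assoc] at hy
        rcases hy with rfl | rfl | rfl | rfl
        · exact ⟨((1,8,326),3,1,2), by decide, tag_bk3, by decide, by decide⟩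
        · exact ⟨((1,9,366),4,1,3), by decide, tag_bk4, by decide, by decide⟩
        · exact ⟨((5,34,1427),12,5,7), by decide, tag_bk12_7, by decide, by decide⟩
        · exact ⟨((1,6,245),2,1,1), by decide, tag_bk2, by decide, by decide⟩
    · rw [hl2M m5 hMi (by decide)]
      rw [show m5 = ((5,34,1427) ::ₘ (1,9,366) ::ₘ Multiset.replicate 2 (1,8,326) + Multiset.replicate 2 (1,6,245)) from rfl]
      simp only [Multiset.map_add, Multiset.map_cons, Multiset.map_replicate,
        Multiset.sum_add, Multiset.sum_cons, Multiset.sum_replicate, smul_eq_mul]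
      norm_num [lval]
end
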